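/- Let π(x) = a + r/(x−i) and σ(x) = b + s/(x−j) be elements of PGL(2,q) (r, s ≠ 0), with distinguished element ∞. Then hd(π^△, σ^△) = hd(π, σ) − 3 if and only if r = s and (b − a)(j − i) = r. -/

import Mathlib

open OnePoint
open scoped Classical

noncomputable def hd {Ω : Type*} (π σ : Equiv.Perm Ω) : ℕ :=
  Set.ncard {x | π x ≠ σ x}

/-- Contraction relative to the distinguished element `F`. -/
noncomputable def ctr {Ω : Type*} (F : Ω) (π : Equiv.Perm Ω) : Equiv.Perm Ω :=
  π.trans (Equiv.swap F (π F))

/-- The map `x ↦ k + r/(x - i)` on `K ∪ {∞}`, with `f ∞ = k` and `f i = ∞`. -/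
noncomputable def pform {K : Type*} [Field K] (k r i : K) (x : OnePoint K) : OnePoint K :=
  Option.elim x ((k : OnePoint K))
    (fun y => if y = i then ∞ else ((k + r / (y - i) : K) : OnePoint K))


/-!
Outside `{F, π⁻¹ F, σ⁻¹ F}` the contraction `ctr F π` agrees with `π`, so the Hamming distance can
drop by three only if `π` and `σ` disagree at all three points and their contractions agree there.
For the maps `pform` this means `i ≠ j`, `σ i = π ∞` and `π j = σ ∞`, that is
`b + s/(i - j) = a` and `a + r/(j - i) = b`.
-/

open Equiv Set

namespace Set

variable {α : Type*}

lemma ncard_triple_le (x y z : α) : ({x, y, z} : Set α).ncard ≤ 3 :=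
  (ncard_insert_le _ _).trans <| Nat.succ_le_succ <| (ncard_insert_le _ _).trans (by simp)

lemma ncard_triple_eq_three_iff {x y z : α} :
    ({x, y, z} : Set α).ncard = 3 ↔ x ≠ y ∧ x ≠ z ∧ y ≠ z := by
  refine ⟨fun h => ?_, fun h => ncard_eq_three.mpr ⟨x, y, z, h.1, h.2.1, h.2.2, rfl⟩⟩
  have hpair (u v : α) : ({u, v} : Set α).ncard ≤ 2 := (ncard_insert_le _ _).trans (by simp)
  refine ⟨?_, ?_, ?_⟩ <;> rintro rfl <;>
    simp only [mem_insert_iff, mem_singleton_iff, true_or, or_true, insert_eq_of_mem] at h <;>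
    exact absurd (h.symm.trans_le (hpair _ _)) (by norm_num)

variable [Finite α] {D D' S : Set α}

lemma ncard_le_ncard_add_ncard_of_diff_eq (h : D \ S = D' \ S) :
    D.ncard ≤ D'.ncard + S.ncard :=
  calc D.ncard ≤ (D \ S).ncard + S.ncard := ncard_le_ncard_sdiff_add_ncard D S
    _ = (D' \ S).ncard + S.ncard := by rw [h]
    _ ≤ D'.ncard + S.ncard := Nat.add_le_add_right (ncard_le_ncard sdiff_subset) _

lemma ncard_add_ncard_eq_iff_of_diff_eq (h : D \ S = D' \ S) :
    D'.ncard + S.ncard = D.ncard ↔ S ⊆ D ∧ Disjoint D' S := by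
  rw [← ncard_inter_add_ncard_sdiff_eq_ncard D S, ← ncard_inter_add_ncard_sdiff_eq_ncard D' S, h,
    ← inter_eq_right, disjoint_iff_inter_eq_empty, ← ncard_eq_zero]
  have hle : (D ∩ S).ncard ≤ S.ncard := ncard_le_ncard inter_subset_right
  have heq : D ∩ S = S ↔ (D ∩ S).ncard = S.ncard :=
    ⟨fun h' => by rw [h'], fun h' => eq_of_subset_of_ncard_le inter_subset_right h'.ge⟩
  rw [heq]
  omega

end Set

section Contraction

variable {Ω : Type*} {F : Ω} {π σ : Perm Ω}

lemma ctr_apply_self : ctr F π F = F := by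
  simp [ctr]

lemma ctr_apply_symm_apply_self : ctr F π (π.symm F) = π F := by
  simp [ctr]

lemma ctr_apply_of_ne {x : Ω} (hF : x ≠ F) (hπ : x ≠ π.symm F) : ctr F π x = π x :=
  swap_apply_of_ne_of_ne (by rwa [Ne, ← eq_symm_apply]) (by simpa using hF)

lemma setOf_ctr_ne_diff_eq :
    {x | ctr F π x ≠ ctr F σ x} \ {F, π.symm F, σ.symm F} =
      {x | π x ≠ σ x} \ {F, π.symm F, σ.symm F} := by
  ext x
  simp only [mem_sdiff, mem_ofPred_eq, mem_insert_iff, mem_singleton_iff, not_or, and_congr_left_iff]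
  rintro ⟨hF, hπ, hσ⟩
  rw [ctr_apply_of_ne hF hπ, ctr_apply_of_ne hF hσ]

theorem hd_ctr_add_three_eq_iff [Finite Ω] :
    hd (ctr F π) (ctr F σ) + 3 = hd π σ ↔
      (F ≠ π.symm F ∧ F ≠ σ.symm F ∧ π.symm F ≠ σ.symm F) ∧
        σ (π.symm F) = π F ∧ π (σ.symm F) = σ F := by
  have hdiff := (setOf_ctr_ne_diff_eq (F := F) (π := π) (σ := σ)).symm
  have hle := ncard_le_ncard_add_ncard_of_diff_eq hdiff
  have hcard := ncard_add_ncard_eq_iff_of_diff_eq hdiff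
  unfold hd
  constructor
  · intro h
    have h3 : ({F, π.symm F, σ.symm F} : Set Ω).ncard = 3 :=
      le_antisymm (ncard_triple_le _ _ _) (by omega)
    obtain ⟨-, hdisj⟩ := hcard.mp (by rw [h3, h])
    have hdist := ncard_triple_eq_three_iff.mp h3
    have ⟨hπF, hσF, hπσ⟩ := hdist
    have agree : ∀ x ∈ ({F, π.symm F, σ.symm F} : Set Ω), ctr F π x = ctr F σ x :=
      fun x hx => not_not.mp fun hne => disjoint_left.mp hdisj hne hx
    refine ⟨hdist, ?_, ?_⟩
    · have := agree (π.symm F) (by simp)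
      rwa [ctr_apply_symm_apply_self, ctr_apply_of_ne hπF.symm hπσ, eq_comm] at this
    · have := agree (σ.symm F) (by simp)
      rwa [ctr_apply_symm_apply_self, ctr_apply_of_ne hσF.symm hπσ.symm] at this
  · rintro ⟨hdist, hσπ, hπσ⟩
    have ⟨hπF, hσF, hπσ'⟩ := hdist
    have hπF' : π F ≠ F := fun h => hπF (π.eq_symm_apply.mpr h)
    have hσF' : σ F ≠ F := fun h => hσF (σ.eq_symm_apply.mpr h)
    rw [← ncard_triple_eq_three_iff.mpr hdist]
    refine hcard.mpr ⟨?_, disjoint_left.mpr ?_⟩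
    · rintro x (rfl | rfl | rfl)
      · exact fun h => hπF (σ.injective (hσπ.trans h)).symm
      · simpa [hσπ] using hπF'.symm
      · simpa [hπσ] using hσF'
    · rintro x hx (rfl | rfl | rfl)
      · exact hx (by rw [ctr_apply_self, ctr_apply_self])
      · exact hx (by rw [ctr_apply_symm_apply_self, ctr_apply_of_ne hπF.symm hπσ', hσπ])
      · exact hx (by rw [ctr_apply_symm_apply_self, ctr_apply_of_ne hσF.symm hπσ'.symm, hπσ])

end Contraction

section Pform

variable {K : Type*} [Field K]

@[simp]
lemma pform_infty (k r i : K) : pform k r i ∞ = k := rfl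

@[simp]
lemma pform_coe_self (k r i : K) : pform k r i i = ∞ := by
  show Option.elim (Option.some i) _ _ = _
  simp

lemma pform_coe_of_ne (k r : K) {i x : K} (hx : x ≠ i) : pform k r i x = (k + r / (x - i) : K) := by
  show Option.elim (Option.some x) _ _ = _
  simp [hx]

lemma add_div_sub_eq_and_add_div_sub_eq_iff {a b r s i j : K} (hij : i ≠ j) :
    b + s / (i - j) = a ∧ a + r / (j - i) = b ↔ r = s ∧ (b - a) * (j - i) = r := by
  have hij' : i - j ≠ 0 := sub_ne_zero.mpr hij
  have hji' : j - i ≠ 0 := sub_ne_zero.mpr hij.symm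
  constructor
  · rintro ⟨hσ, hπ⟩
    field_simp at hσ hπ
    exact ⟨by linear_combination hπ - hσ, by linear_combination -hπ⟩
  · rintro ⟨rfl, h⟩
    rw [← h]
    constructor <;> field_simp <;> ring

end Pform

theorem stmt12_general {K : Type*} [Field K] [Fintype K] (π σ : Equiv.Perm (OnePoint K))
    (a r i b s j : K) (hr : r ≠ 0)
    (hπ : ∀ x, π x = pform a r i x) (hσ : ∀ x, σ x = pform b s j x) :
    (hd (ctr ∞ π) (ctr ∞ σ) : ℤ) = (hd π σ : ℤ) - 3 ↔
      r = s ∧ (b - a) * (j - i) = r := by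
  have hπi : π.symm ∞ = i := π.symm_apply_eq.mpr (by rw [hπ, pform_coe_self])
  have hσj : σ.symm ∞ = j := σ.symm_apply_eq.mpr (by rw [hσ, pform_coe_self])
  rw [show ((hd (ctr ∞ π) (ctr ∞ σ) : ℤ) = hd π σ - 3 ↔ hd (ctr ∞ π) (ctr ∞ σ) + 3 = hd π σ) by
    omega, hd_ctr_add_three_eq_iff, hπi, hσj, hπ, hσ, hπ, hσ]
  by_cases hij : i = j
  · subst hij
    simp [hr.symm]
  · rw [pform_coe_of_ne _ _ hij, pform_coe_of_ne _ _ (Ne.symm hij), pform_infty, pform_infty,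
      coe_eq_coe, coe_eq_coe, ← add_div_sub_eq_and_add_div_sub_eq_iff hij]
    simp [hij]

theorem stmt12 {K : Type*} [Field K] [Fintype K] (π σ : Equiv.Perm (OnePoint K))
    (a r i b s j : K) (hr : r ≠ 0) (hs : s ≠ 0)
    (hπ : ∀ x, π x = pform a r i x) (hσ : ∀ x, σ x = pform b s j x) :
    (hd (ctr ∞ π) (ctr ∞ σ) : ℤ) = (hd π σ : ℤ) - 3 ↔
      r = s ∧ (b - a) * (j - i) = r :=
  stmt12_general π σ a r i b s j hr hπ hσ
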